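/- arXiv:2601.19779 — 2 statements merged into one kernel-verified Lean document; each statement's English description precedes it below -/
import Mathlib

section
/- Let Q₂ : ℝ⁹ → ℝ⁹ and g₃, g₄ ∈ ℝ⁹ be as in the context. Then for every natural number b, the b-fold iterate of Q₂ applied to g₄ satisfies Q₂^{∘b}(g₄) = b·g₃ + (b+1)·g₄. -/
/-- The `max`-tropicalisation of the pullback action of `σ₂⁻¹` of `Gr(4,8)` on the
ŷ-variables of the initial seed, realizing the action of `σ₂` on g-vectors. -/
noncomputable def Q2 : (Fin 9 → ℝ) → (Fin 9 → ℝ) := fun v =>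
  ![v 0 + v 4 + max 0 (max (v 4) (max (v 4 + v 5) (max (v 4 + v 7) (v 4 + v 5 + v 7))))
      - max 0 (max (v 4) (v 4 + v 5)) - max 0 (max (v 4) (v 4 + v 7)),
    v 5 - max 0 (max (v 4) (max (v 4 + v 5) (max (v 4 + v 7) (v 4 + v 5 + v 7)))),
    v 1 + max 0 (max (v 4) (v 4 + v 7)),
    v 7 - max 0 (max (v 4) (max (v 4 + v 5) (max (v 4 + v 7) (v 4 + v 5 + v 7)))),
    max 0 (max (v 4) (v 4 + v 5)) + max 0 (max (v 4) (v 4 + v 7)) - v 4 - v 5 - v 7,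
    v 2 + max 0 (max (v 4) (max (v 4 + v 5) (max (v 4 + v 7) (v 4 + v 5 + v 7))))
      - max 0 (max (v 4) (v 4 + v 7)),
    v 3 + max 0 (max (v 4) (v 4 + v 5)),
    v 6 + max 0 (max (v 4) (max (v 4 + v 5) (max (v 4 + v 7) (v 4 + v 5 + v 7))))
      - max 0 (max (v 4) (v 4 + v 5)),
    v 4 + v 5 + v 7 + v 8
      - max 0 (max (v 4) (max (v 4 + v 5) (max (v 4 + v 7) (v 4 + v 5 + v 7))))]

/-- The g-vector `g₃ = σ₂⁻¹(g₁)`. -/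
noncomputable def g3 : Fin 9 → ℝ := ![1, 0, -1, 0, -2, 1, -1, 1, 1]

/-- The g-vector `g₄ = σ₁⁻¹(g₂)`. -/
noncomputable def g4 : Fin 9 → ℝ := ![-1, -1, 1, -1, 2, 0, 1, 0, -1]

section aux

variable (x0 x1 x2 x3 x4 x5 x6 x7 x8 : ℝ)

lemma vec9_0 : ![x0,x1,x2,x3,x4,x5,x6,x7,x8] (0:Fin 9) = x0 := rfl
lemma vec9_1 : ![x0,x1,x2,x3,x4,x5,x6,x7,x8] (1:Fin 9) = x1 := rfl
lemma vec9_2 : ![x0,x1,x2,x3,x4,x5,x6,x7,x8] (2:Fin 9) = x2 := rfl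
lemma vec9_3 : ![x0,x1,x2,x3,x4,x5,x6,x7,x8] (3:Fin 9) = x3 := rfl
lemma vec9_4 : ![x0,x1,x2,x3,x4,x5,x6,x7,x8] (4:Fin 9) = x4 := rfl
lemma vec9_5 : ![x0,x1,x2,x3,x4,x5,x6,x7,x8] (5:Fin 9) = x5 := rfl
lemma vec9_6 : ![x0,x1,x2,x3,x4,x5,x6,x7,x8] (6:Fin 9) = x6 := rfl
lemma vec9_7 : ![x0,x1,x2,x3,x4,x5,x6,x7,x8] (7:Fin 9) = x7 := rfl
lemma vec9_8 : ![x0,x1,x2,x3,x4,x5,x6,x7,x8] (8:Fin 9) = x8 := rfl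
lemma vec9_0' : ![x0,x1,x2,x3,x4,x5,x6,x7,x8] (⟨0, by norm_num⟩ : Fin 9) = x0 := rfl
lemma vec9_1' : ![x0,x1,x2,x3,x4,x5,x6,x7,x8] (⟨1, by norm_num⟩ : Fin 9) = x1 := rfl
lemma vec9_2' : ![x0,x1,x2,x3,x4,x5,x6,x7,x8] (⟨2, by norm_num⟩ : Fin 9) = x2 := rfl
lemma vec9_3' : ![x0,x1,x2,x3,x4,x5,x6,x7,x8] (⟨3, by norm_num⟩ : Fin 9) = x3 := rfl
lemma vec9_4' : ![x0,x1,x2,x3,x4,x5,x6,x7,x8] (⟨4, by norm_num⟩ : Fin 9) = x4 := rfl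
lemma vec9_5' : ![x0,x1,x2,x3,x4,x5,x6,x7,x8] (⟨5, by norm_num⟩ : Fin 9) = x5 := rfl
lemma vec9_6' : ![x0,x1,x2,x3,x4,x5,x6,x7,x8] (⟨6, by norm_num⟩ : Fin 9) = x6 := rfl
lemma vec9_7' : ![x0,x1,x2,x3,x4,x5,x6,x7,x8] (⟨7, by norm_num⟩ : Fin 9) = x7 := rfl
lemma vec9_8' : ![x0,x1,x2,x3,x4,x5,x6,x7,x8] (⟨8, by norm_num⟩ : Fin 9) = x8 := rfl

end aux

lemma Q2_step (x : ℝ) (hx : 0 ≤ x) :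
    Q2 (x • g3 + (x + 1) • g4) = (x + 1) • g3 + (x + 2) • g4 := by
  have hv : x • g3 + (x + 1) • g4
      = ![-1, -(x+1), 1, -(x+1), 2, x, 1, x, -1] := by
    funext i
    fin_cases i <;>
      simp only [Pi.add_apply, Pi.smul_apply, smul_eq_mul, g3, g4,
        vec9_0, vec9_1, vec9_2, vec9_3, vec9_4, vec9_5, vec9_6, vec9_7, vec9_8,
        vec9_0', vec9_1', vec9_2', vec9_3', vec9_4', vec9_5', vec9_6', vec9_7', vec9_8'] <;>
      ring
  rw [hv]
  have h1 : (2:ℝ) ⊔ (2 + x) = 2 + x := max_eq_right (by linarith)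
  have h2 : (2 + x) ⊔ (2 + x + x) = 2 + x + x := max_eq_right (by linarith)
  have hA : (0:ℝ) ⊔ (2 ⊔ (2 + x)) = 2 + x := by
    rw [h1]; exact max_eq_right (by linarith)
  have hP : (0:ℝ) ⊔ (2 ⊔ ((2 + x) ⊔ ((2 + x) ⊔ (2 + x + x)))) = 2 + x + x := by
    rw [h2, h2, max_eq_right (by linarith : (2:ℝ) ≤ 2 + x + x)]
    exact max_eq_right (by linarith)
  funext i
  fin_cases i <;>
    simp only [Q2, Pi.add_apply, Pi.smul_apply, smul_eq_mul, g3, g4,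
      vec9_0, vec9_1, vec9_2, vec9_3, vec9_4, vec9_5, vec9_6, vec9_7, vec9_8,
      vec9_0', vec9_1', vec9_2', vec9_3', vec9_4', vec9_5', vec9_6', vec9_7', vec9_8'] <;>
    simp only [hA, hP] <;> linarith

/-- For every natural number `b`, the `b`-fold iterate of `Q₂` applied to `g₄`
equals `b·g₃ + (b+1)·g₄`. -/
theorem stmt_11 (b : ℕ) :
    Q2^[b] g4 = (b : ℝ) • g3 + ((b : ℝ) + 1) • g4 := by
  induction b with
  | zero => simp
  | succ n ih =>
      rw [Function.iterate_succ_apply', ih, Q2_step _ (Nat.cast_nonneg n)]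
      push_cast
      module
end

section
/- Let n ≥ 1, let B = (b_{ij}) be an n×n integer matrix, and let k ∈ {1,…,n}. Define T_{B,k} : ℝⁿ → ℝⁿ by (T_{B,k} v)_k = −v_k and (T_{B,k} v)_j = v_j + max(b_{jk},0)·v_k − b_{jk}·min(v_k,0) for j ≠ k, and let B' = μ_k(B) be the mutated matrix, i.e. b'_{ij} = −b_{ij} if i = k or j = k, and b'_{ij} = b_{ij} + sgn(b_{ik})·max(b_{ik} b_{kj}, 0) otherwise. Then T_{B',k} ∘ T_{B,k} = id_{ℝⁿ}; in particular each T_{B,k} is a piecewise-linear bijection of ℝⁿ with inverse T_{B',k}. -/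
/-- Matrix mutation at index `k`. -/
def matMutation {n : ℕ} (B : Matrix (Fin n) (Fin n) ℤ) (k : Fin n) :
    Matrix (Fin n) (Fin n) ℤ :=
  fun i j => if i = k ∨ j = k then -B i j
    else B i j + Int.sign (B i k) * max (B i k * B k j) 0

/-- The piecewise-linear transformation rule for g-vectors under mutation of the
initial seed at index `k`: `(T v)_k = -v_k` and
`(T v)_j = v_j + [b_{jk}]_+ v_k - b_{jk} min(v_k, 0)` for `j ≠ k`. -/
noncomputable def gvecMap {n : ℕ} (B : Matrix (Fin n) (Fin n) ℤ) (k : Fin n) :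
    (Fin n → ℝ) → (Fin n → ℝ) :=
  fun v j => if j = k then -v k
    else v j + max ((B j k : ℝ)) 0 * v k - (B j k : ℝ) * min (v k) 0

/-- Mutating the initial seed at `k` and then mutating back is the identity on
g-vectors: `T_{μ_k(B),k} ∘ T_{B,k} = id`. -/
theorem stmt_16 (n : ℕ) (hn : 1 ≤ n) (B : Matrix (Fin n) (Fin n) ℤ) (k : Fin n) :
    gvecMap (matMutation B k) k ∘ gvecMap B k = id := by
  funext v j
  simp only [Function.comp_apply, gvecMap, matMutation, id]
  by_cases hj : j = k
  · simp [hj]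
  · simp only [hj, if_false, if_true, or_true, Int.cast_neg]
    have h1 : max (-(B j k : ℝ)) 0 = max (B j k : ℝ) 0 - (B j k : ℝ) := by
      rcases le_total ((B j k : ℝ)) 0 with h | h <;> simp [max_eq_left, max_eq_right, *] <;> linarith
    have h2 : min (-v k) 0 = -(v k) + min (v k) 0 := by
      rcases le_total (v k) 0 with h | h <;> simp [min_eq_left, min_eq_right, *] <;> linarith
    rw [h1, h2]; ring
end
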